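/- arXiv:math/0605084 — 4 statements merged into one kernel-verified Lean document; each statement's English description precedes it below -/
import Mathlib

section
/- A single cut-and-paste move on a permutation increases the number of parity adjacencies by at most 2. -/
/-- A cut-and-paste move: cut out a contiguous substring `M`, optionally
reverse it, and paste it back at any position of the remaining string. -/
def IsMove (l l' : List ℕ) : Prop :=
  ∃ P M S X Y : List ℕ, l = P ++ M ++ S ∧ X ++ Y = P ++ S ∧
    (l' = X ++ M ++ Y ∨ l' = X ++ M.reverse ++ Y)

/-- `MoveSeq k l l'` : `l` can be transformed into `l'` by exactly `k`
cut-and-paste moves. -/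
inductive MoveSeq : ℕ → List ℕ → List ℕ → Prop
  | refl (l : List ℕ) : MoveSeq 0 l l
  | step {k : ℕ} {l l' l'' : List ℕ} :
      IsMove l l' → MoveSeq k l' l'' → MoveSeq (k + 1) l l''

/-- Number of parity adjacencies: consecutive pairs of opposite parity. -/
def parityAdj (l : List ℕ) : ℕ :=
  (l.zip l.tail).countP (fun p => p.1 % 2 != p.2 % 2)

/-- Number of adjacencies: consecutive pairs whose values differ by 1. -/
def adjCount (l : List ℕ) : ℕ :=
  (l.zip l.tail).countP (fun p => (p.1 + 1 == p.2) || (p.2 + 1 == p.1))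

lemma pa_cons2 (a b : ℕ) (l : List ℕ) :
    parityAdj (a :: b :: l) = (if a % 2 != b % 2 then 1 else 0) + parityAdj (b :: l) := by
  simp [parityAdj, List.countP_cons]
  omega

lemma pa_one (a : ℕ) : parityAdj [a] = 0 := rfl

lemma pa_lower : ∀ (U V : List ℕ), parityAdj U + parityAdj V ≤ parityAdj (U ++ V) := by
  intro U
  induction U with
  | nil => simp [parityAdj]
  | cons a U ih =>
    intro V
    cases U with
    | nil =>
      cases V with
      | nil => simp [parityAdj]
      | cons v V' => simp [pa_one, pa_cons2]
    | cons b U' =>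
      have := ih V
      simp only [List.cons_append, pa_cons2] at *
      omega

lemma pa_upper : ∀ (U V : List ℕ), parityAdj (U ++ V) ≤ parityAdj U + parityAdj V + 1 := by
  intro U
  induction U with
  | nil => simp [parityAdj]
  | cons a U ih =>
    intro V
    cases U with
    | nil =>
      cases V with
      | nil => simp [parityAdj]
      | cons v V' => simp [pa_one, pa_cons2]; split <;> omega
    | cons b U' =>
      have := ih V
      simp only [List.cons_append, pa_cons2] at *
      omega

lemma pa_snoc' : ∀ (l : List ℕ) (x a : ℕ),
    parityAdj (l ++ [x] ++ [a]) = parityAdj (l ++ [x]) + (if x % 2 != a % 2 then 1 else 0) := by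
  intro l
  induction l with
  | nil => intro x a; simp [pa_cons2, pa_one]
  | cons c l ih =>
    intro x a
    cases l with
    | nil => simp [pa_cons2, pa_one]
    | cons d l' =>
      have := ih x a
      simp only [List.cons_append, pa_cons2] at *
      omega

lemma bne_symm' (a b : ℕ) : (b % 2 != a % 2) = (a % 2 != b % 2) := by
  rcases Nat.mod_two_eq_zero_or_one a with h1 | h1 <;>
    rcases Nat.mod_two_eq_zero_or_one b with h2 | h2 <;> simp [h1, h2]

lemma pa_rev : ∀ (l : List ℕ), parityAdj l.reverse = parityAdj l := by
  intro l
  induction l with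
  | nil => rfl
  | cons a l ih =>
    cases l with
    | nil => rfl
    | cons b l' =>
      have h1 : (a :: b :: l').reverse = l'.reverse ++ [b] ++ [a] := by
        simp
      rw [h1, pa_snoc']
      have h2 : l'.reverse ++ [b] = (b :: l').reverse := by simp
      rw [h2, ih, pa_cons2, bne_symm']
      omega

lemma pa_mod : ∀ (l : List ℕ) (a b : ℕ),
    parityAdj (a :: l ++ [b]) % 2 = (a + b) % 2 := by
  intro l
  induction l with
  | nil =>
    intro a b
    rcases Nat.mod_two_eq_zero_or_one a with h1 | h1 <;>
      rcases Nat.mod_two_eq_zero_or_one b with h2 | h2 <;>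
        simp [pa_cons2, pa_one, h1, h2] <;> omega
  | cons c l ih =>
    intro a b
    have h1 := ih c b
    simp only [List.cons_append, pa_cons2] at *
    rcases Nat.mod_two_eq_zero_or_one a with ha | ha <;>
      rcases Nat.mod_two_eq_zero_or_one c with hc | hc <;>
        simp [ha, hc] <;> omega

lemma key_bound (n : ℕ) (mid : List ℕ) (P M S X Y M' : List ℕ)
    (h1 : mid = P ++ M ++ S) (h2 : X ++ Y = P ++ S)
    (hM' : parityAdj M' = parityAdj M) :
    parityAdj (0 :: (X ++ M' ++ Y) ++ [n + 1]) ≤ parityAdj (0 :: mid ++ [n + 1]) + 2 := by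
  have p1 := pa_mod (X ++ M' ++ Y) 0 (n + 1)
  have p2 := pa_mod mid 0 (n + 1)
  have e1 : 0 :: (X ++ M' ++ Y) ++ [n + 1] = (0 :: X) ++ (M' ++ (Y ++ [n + 1])) := by
    simp
  have e2 : 0 :: mid ++ [n + 1] = (0 :: P) ++ (M ++ (S ++ [n + 1])) := by
    simp [h1]
  have e3 : (0 :: X) ++ (Y ++ [n + 1]) = (0 :: P) ++ (S ++ [n + 1]) := by
    have : (0 :: X) ++ (Y ++ [n + 1]) = 0 :: ((X ++ Y) ++ [n + 1]) := by simp
    rw [this, h2]; simp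
  have u1 : parityAdj ((0 :: X) ++ (M' ++ (Y ++ [n + 1]))) ≤
      parityAdj (0 :: X) + parityAdj (M' ++ (Y ++ [n + 1])) + 1 := pa_upper _ _
  have u2 : parityAdj (M' ++ (Y ++ [n + 1])) ≤
      parityAdj M' + parityAdj (Y ++ [n + 1]) + 1 := pa_upper _ _
  have l1 : parityAdj (0 :: X) + parityAdj (Y ++ [n + 1]) ≤
      parityAdj ((0 :: X) ++ (Y ++ [n + 1])) := pa_lower _ _
  rw [e3] at l1
  have u3 : parityAdj ((0 :: P) ++ (S ++ [n + 1])) ≤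
      parityAdj (0 :: P) + parityAdj (S ++ [n + 1]) + 1 := pa_upper _ _
  have l2 : parityAdj (0 :: P) + parityAdj (M ++ (S ++ [n + 1])) ≤
      parityAdj ((0 :: P) ++ (M ++ (S ++ [n + 1]))) := pa_lower _ _
  have l3 : parityAdj M + parityAdj (S ++ [n + 1]) ≤
      parityAdj (M ++ (S ++ [n + 1])) := pa_lower _ _
  rw [e1] at p1 ⊢
  rw [e2] at p2 ⊢
  omega

/-- A single cut-and-paste move (on the core of an extended permutation of
`[n]`, sentinels `0` and `n+1` fixed at the ends) increases the number of
parity adjacencies by at most 2. -/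
theorem move_parityAdj_le (n : ℕ) (mid mid' : List ℕ)
    (hperm : mid.Perm (List.range' 1 n)) (hmove : IsMove mid mid') :
    parityAdj (0 :: mid' ++ [n + 1]) ≤ parityAdj (0 :: mid ++ [n + 1]) + 2 := by
  obtain ⟨P, M, S, X, Y, h1, h2, h3⟩ := hmove
  rcases h3 with h3 | h3 <;> subst h3
  · exact key_bound n mid P M S X Y M h1 h2 rfl
  · exact key_bound n mid P M S X Y M.reverse h1 h2 (pa_rev M)
end

section
/- A single cut-and-paste move on a permutation increases the number of adjacencies by at most 3. -/
def prA : ℕ × ℕ → Bool := fun q => (q.1 + 1 == q.2) || (q.2 + 1 == q.1)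

def juncA (A B : List ℕ) : ℕ :=
  match A.getLast?, B.head? with
  | some x, some y => if prA (x, y) then 1 else 0
  | _, _ => 0

lemma adjCount_cons_cons (a b : ℕ) (t : List ℕ) :
    adjCount (a :: b :: t) = adjCount (b :: t) + (if prA (a, b) then 1 else 0) := by
  simp [adjCount, List.countP_cons, prA]

lemma juncA_le (A B : List ℕ) : juncA A B ≤ 1 := by
  unfold juncA
  rcases A.getLast? with _ | x <;> rcases B.head? with _ | y <;> simp <;> split <;> simp

lemma adjCount_append (A B : List ℕ) :
    adjCount (A ++ B) = adjCount A + juncA A B + adjCount B := by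
  induction A with
  | nil => simp [adjCount, juncA]
  | cons a A ih =>
    cases A with
    | nil =>
      cases B with
      | nil => simp [adjCount, juncA]
      | cons b t =>
        simp only [List.singleton_append, adjCount_cons_cons]
        simp [adjCount, juncA]
        omega
    | cons a' A' =>
      simp only [List.cons_append] at ih ⊢
      simp only [adjCount_cons_cons, ih]
      have : juncA (a :: a' :: A') B = juncA (a' :: A') B := by
        simp [juncA, List.getLast?_cons_cons]
      rw [this]
      omega

lemma adjCount_reverse (l : List ℕ) : adjCount l.reverse = adjCount l := by
  induction l with
  | nil => rfl
  | cons a l ih =>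
    have h1 : adjCount ([a] ++ l) = adjCount [a] + juncA [a] l + adjCount l :=
      adjCount_append [a] l
    rw [List.reverse_cons, adjCount_append, ih]
    have h2 : juncA l.reverse [a] = juncA [a] l := by
      cases h : l.head? with
      | none => simp [juncA, List.getLast?_reverse, h]
      | some x => simp [juncA, List.getLast?_reverse, h, prA, Bool.or_comm]
    have h3 : adjCount [a] = 0 := by simp [adjCount]
    simp only [List.singleton_append] at h1
    omega

lemma key (P M M' S X Y : List ℕ) (hM : adjCount M' = adjCount M)
    (h : X ++ Y = P ++ S) :
    adjCount (X ++ (M' ++ Y)) ≤ adjCount (P ++ (M ++ S)) + 3 := by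
  have e1 := adjCount_append X (M' ++ Y)
  have e2 := adjCount_append M' Y
  have e3 := adjCount_append P (M ++ S)
  have e4 := adjCount_append M S
  have e5 := adjCount_append X Y
  have e6 := adjCount_append P S
  have hxy : adjCount (X ++ Y) = adjCount (P ++ S) := by rw [h]
  have j1 := juncA_le X (M' ++ Y)
  have j2 := juncA_le M' Y
  have j6 := juncA_le P S
  omega

/-- A single cut-and-paste move increases the number of adjacencies
(consecutive entries differing by 1, with sentinels `0` and `n+1`)
by at most 3. -/
theorem move_adjCount_le (n : ℕ) (mid mid' : List ℕ)
    (hperm : mid.Perm (List.range' 1 n)) (hmove : IsMove mid mid') :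
    adjCount (0 :: mid' ++ [n + 1]) ≤ adjCount (0 :: mid ++ [n + 1]) + 3 := by
  obtain ⟨P, M, S, X, Y, hl, hxy, hc⟩ := hmove
  have h : (0 :: X) ++ (Y ++ [n + 1]) = (0 :: P) ++ (S ++ [n + 1]) := by
    simp only [List.cons_append, ← List.append_assoc, hxy]
  subst hl
  rcases hc with rfl | rfl
  · have := key (0 :: P) M M (S ++ [n + 1]) (0 :: X) (Y ++ [n + 1]) rfl h
    simp only [List.cons_append, List.append_assoc] at this ⊢
    exact this
  · have := key (0 :: P) M M.reverse (S ++ [n + 1]) (0 :: X) (Y ++ [n + 1])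
      (adjCount_reverse M) h
    simp only [List.cons_append, List.append_assoc] at this ⊢
    exact this
end

section
/- Every permutation of [n] can be sorted to the identity using at most n − ⌈√n⌉ + 1 cut-and-paste moves. -/
section ES

open Function Finset

/-- Erdős–Szekeres, copied from the Mathlib Archive
(`Theorems100.erdos_szekeres`), since the Archive is not part of `Mathlib`. -/
theorem my_erdos_szekeres {α : Type*} [LinearOrder α] {r s n : ℕ} {f : Fin n → α}
    (hn : r * s < n) (hf : Injective f) :
    (∃ t : Finset (Fin n), r < #t ∧ StrictMonoOn f ↑t) ∨
      ∃ t : Finset (Fin n), s < #t ∧ StrictAntiOn f ↑t := by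
  let inc_sequences_ending_in : Fin n → Finset (Finset (Fin n)) := fun i =>
    univ.powerset.filter fun t => Finset.max t = i ∧ StrictMonoOn f ↑t
  let dec_sequences_ending_in : Fin n → Finset (Finset (Fin n)) := fun i =>
    univ.powerset.filter fun t => Finset.max t = i ∧ StrictAntiOn f ↑t
  have inc_i : ∀ i, {i} ∈ inc_sequences_ending_in i := fun i => by
    simp [inc_sequences_ending_in, StrictMonoOn]
  have dec_i : ∀ i, {i} ∈ dec_sequences_ending_in i := fun i => by
    simp [dec_sequences_ending_in, StrictAntiOn]
  let ab' : Fin n → ℕ × ℕ := by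
    intro i
    apply
      (max' ((inc_sequences_ending_in i).image card) (Nonempty.image ⟨{i}, inc_i i⟩ _),
        max' ((dec_sequences_ending_in i).image card) (Nonempty.image ⟨{i}, dec_i i⟩ _))
  generalize hab : ab' = ab
  rsuffices ⟨i, hi⟩ : ∃ i, r < (ab i).1 ∨ s < (ab i).2
  · refine Or.imp ?_ ?_ hi
    on_goal 1 =>
      have : (ab i).1 ∈ image card (inc_sequences_ending_in i) := by
        simp only [← hab]; exact max'_mem _ (Nonempty.image ⟨{i}, inc_i i⟩ _)
    on_goal 2 =>
      have : (ab i).2 ∈ image card (dec_sequences_ending_in i) := by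
        simp only [← hab]; exact max'_mem _ (Nonempty.image ⟨{i}, dec_i i⟩ _)
    all_goals
      intro hi
      rw [mem_image] at this
      obtain ⟨t, ht₁, ht₂⟩ := this
      refine ⟨t, by rwa [ht₂], ?_⟩
      rw [mem_filter] at ht₁
      apply ht₁.2.2
  have : Injective ab := by
    simp only [← hab]
    apply Function.Injective.of_lt_imp_ne
    intro i j k q
    injection q with q₁ q₂
    cases lt_or_gt_of_ne fun _ => ne_of_lt ‹i < j› (hf ‹f i = f j›)
    on_goal 1 =>
      apply ne_of_lt _ q₁
      have : (ab' i).1 ∈ image card (inc_sequences_ending_in i) := by exact max'_mem _ (Nonempty.image ⟨{i}, inc_i i⟩ _)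
    on_goal 2 =>
      apply ne_of_lt _ q₂
      have : (ab' i).2 ∈ image card (dec_sequences_ending_in i) := by exact max'_mem _ (Nonempty.image ⟨{i}, dec_i i⟩ _)
    all_goals
      rw [Nat.lt_iff_add_one_le]
      apply le_max'
      rw [mem_image] at this ⊢
      rcases this with ⟨t, ht₁, ht₂⟩
      rw [mem_filter] at ht₁
      have : t.max = i := by simp only [ht₁.2.1]
      refine ⟨insert j t, ?_, ?_⟩
      · rw [mem_filter]
        refine ⟨?_, ?_, ?_⟩
        · rw [mem_powerset]; apply subset_univ
        · convert max_insert (a := j) (s := t)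
          rw [ht₁.2.1, max_eq_left]
          apply WithBot.coe_le_coe.mpr (le_of_lt ‹i < j›)
        simp only [StrictMonoOn, StrictAntiOn, coe_insert, Set.mem_insert_iff, mem_coe]
        rintro x ⟨rfl | _⟩ y ⟨rfl | _⟩ _
        · apply (irrefl _ ‹j < j›).elim
        · exfalso
          apply not_le_of_gt (_root_.trans ‹i < j› ‹j < y›) (le_max_of_eq ‹y ∈ t› ‹t.max = i›)
        · first
          | apply lt_of_le_of_lt _ ‹f i < f j›
          | apply lt_of_lt_of_le ‹f j < f i› _
          rcases lt_or_eq_of_le (le_max_of_eq ‹x ∈ t› ‹t.max = i›) with (_ | rfl)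
          · apply le_of_lt (ht₁.2.2 ‹x ∈ t› (mem_of_max ‹t.max = i›) ‹x < i›)
          · rfl
        · apply ht₁.2.2 ‹x ∈ t› ‹y ∈ t› ‹x < y›
      · rw [card_insert_of_notMem, ht₂]
        intro
        apply not_le_of_gt ‹i < j› (le_max_of_eq ‹j ∈ t› ‹t.max = i›)
  by_contra! q
  let ran : Finset (ℕ × ℕ) := (range r).image Nat.succ ×ˢ (range s).image Nat.succ
  have : image ab univ ⊆ ran := by
    rintro ⟨x₁, x₂⟩
    simp only [ran, mem_image, exists_prop, mem_range, mem_univ, mem_product, true_and,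
      Prod.ext_iff]
    rintro ⟨i, rfl, rfl⟩
    specialize q i
    have z : 1 ≤ (ab i).1 ∧ 1 ≤ (ab i).2 := by
      simp only [← hab]
      constructor <;>
        · apply le_max'
          rw [mem_image]
          exact ⟨{i}, by solve_by_elim, card_singleton i⟩
    exact ⟨⟨(ab i).1 - 1, by omega⟩, (ab i).2 - 1, by omega⟩
  apply not_le_of_gt hn
  simpa [ran, Nat.succ_injective, card_image_of_injective, ‹Injective ab›] using card_le_card this

end ES


open List

/-- From a strict sublist we can extract an element of the big list not used
by the embedding. -/
lemma exists_middle {s l : List ℕ} (h : s <+ l) (hlen : s.length < l.length) :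
    ∃ P x S, l = P ++ x :: S ∧ s <+ P ++ S := by
  induction h with
  | slnil => simp at hlen
  | @cons l₁ l₂ a h ih => exact ⟨[], a, l₂, rfl, h⟩
  | @cons_cons l₁ l₂ a h ih =>
      obtain ⟨P, x, S, rfl, hs⟩ := ih (by simpa using hlen)
      exact ⟨a :: P, x, S, rfl, by simpa using hs.cons_cons a⟩

/-- The head of `dropWhile` fails the predicate. -/
lemma not_pred_of_dropWhile_cons {α : Type*} {p : α → Bool} :
    ∀ {s : List α} {b : α} {tl : List α}, s.dropWhile p = b :: tl → ¬ p b := by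
  intro s
  induction s with
  | nil => simp
  | cons a s ih =>
    intro b tl h
    by_cases hpa : p a
    · rw [List.dropWhile_cons_of_pos hpa] at h
      exact ih h
    · rw [List.dropWhile_cons_of_neg hpa] at h
      obtain ⟨rfl, rfl⟩ : a = b ∧ s = tl := by constructor <;> injection h
      exact hpa

/-- One insertion move: extend a sorted sublist by one element. -/
lemma insert_step (r : ℕ → ℕ → Prop) [DecidableRel r]
    (htri : ∀ a b : ℕ, a ≠ b → r a b ∨ r b a) (htr : Transitive r)
    {l s : List ℕ} (hsl : s <+ l) (hnd : l.Nodup) (hs : s.Pairwise r)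
    (hlen : s.length < l.length) :
    ∃ l' s', IsMove l l' ∧ l'.Perm l ∧ s' <+ l' ∧ s'.Pairwise r ∧
      s'.length = s.length + 1 := by
  obtain ⟨P, x, S, rfl, hsub⟩ := exists_middle hsl hlen
  have hxPS : x ∉ P ++ S := (List.nodup_cons.mp (List.nodup_middle.mp hnd)).1
  have hxs : x ∉ s := fun hx => hxPS (hsub.subset hx)
  set p : ℕ → Bool := fun a => decide (r a x) with hp
  have key : ∀ b ∈ s.dropWhile p, r x b := by
    rcases hd : s.dropWhile p with _ | ⟨b, tl⟩
    · simp
    · intro c hc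
      have hbx : ¬ r b x := by simpa [hp] using not_pred_of_dropWhile_cons hd
      have hbs : b ∈ s := (List.dropWhile_sublist p).subset (by rw [hd]; simp)
      have hbxne : b ≠ x := fun h => hxs (h ▸ hbs)
      have hxb : r x b := (htri b x hbxne).resolve_left hbx
      rcases List.mem_cons.mp hc with rfl | hctl
      · exact hxb
      · have hpw : (b :: tl).Pairwise r :=
          hd ▸ List.Pairwise.sublist (List.dropWhile_sublist p) hs
        exact htr hxb ((List.pairwise_cons.mp hpw).1 c hctl)
  have hsplit : s.takeWhile p ++ s.dropWhile p <+ P ++ S := by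
    rw [List.takeWhile_append_dropWhile]; exact hsub
  obtain ⟨X, Y, hXY, h1, h2⟩ := List.append_sublist_iff.mp hsplit
  refine ⟨X ++ [x] ++ Y, s.takeWhile p ++ x :: s.dropWhile p, ?_, ?_, ?_, ?_, ?_⟩
  · exact ⟨P, [x], S, X, Y, by simp, hXY.symm, Or.inl rfl⟩
  · calc X ++ [x] ++ Y = X ++ x :: Y := by simp
      _ ~ x :: (X ++ Y) := List.perm_middle
      _ = x :: (P ++ S) := by rw [hXY]
      _ ~ P ++ x :: S := List.perm_middle.symm
  · simpa using h1.append (h2.cons₂ x)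
  · rw [List.pairwise_append]
    refine ⟨List.Pairwise.sublist (List.takeWhile_sublist p) hs, ?_, ?_⟩
    · rw [List.pairwise_cons]
      exact ⟨key, List.Pairwise.sublist (List.dropWhile_sublist p) hs⟩
    · intro a ha b hb
      have hax : r a x := by simpa [hp] using List.mem_takeWhile_imp ha
      rcases List.mem_cons.mp hb with rfl | hb'
      · exact hax
      · exact htr hax (key b hb')
  · have := congrArg List.length (List.takeWhile_append_dropWhile (p := p) (l := s))
    simp only [List.length_append] at this
    simp only [List.length_append, List.length_cons]
    omega

/-- Appending a move at the end of a move sequence. -/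
lemma MoveSeq.snoc : ∀ {k : ℕ} {l l' l'' : List ℕ},
    MoveSeq k l l' → IsMove l' l'' → MoveSeq (k + 1) l l''
  | _, _, _, _, MoveSeq.refl _, hm => MoveSeq.step hm (MoveSeq.refl _)
  | _, _, _, _, MoveSeq.step h1 h2, hm => MoveSeq.step h1 (MoveSeq.snoc h2 hm)

/-- Sorting from a sorted sublist: `l.length - s.length` moves suffice. -/
lemma sort_aux (r : ℕ → ℕ → Prop) [DecidableRel r]
    (htri : ∀ a b : ℕ, a ≠ b → r a b ∨ r b a) (htr : Transitive r)
    (hasym : ∀ a b : ℕ, r a b → r b a → False) :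
    ∀ (d : ℕ) (l s t : List ℕ), l.length - s.length = d → s <+ l → l.Nodup →
      s.Pairwise r → t.Perm l → t.Pairwise r → MoveSeq d l t := by
  intro d
  induction d with
  | zero =>
    intro l s t hd hsl hnd hs hpm ht
    have hlen : s.length = l.length := le_antisymm hsl.length_le (by omega)
    obtain rfl := hsl.eq_of_length hlen
    haveI : Std.Antisymm r := ⟨fun a b h h' => (hasym a b h h').elim⟩
    have : t = s := List.Perm.eq_of_pairwise' ht hs hpm
    rw [this]
    exact MoveSeq.refl _
  | succ d ih =>
    intro l s t hd hsl hnd hs hpm ht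
    have hlen : s.length < l.length := by have := hsl.length_le; omega
    obtain ⟨l', s', hmv, hp, hsl', hs', hlen'⟩ := insert_step r htri htr hsl hnd hs hlen
    have hd' : l'.length - s'.length = d := by rw [hp.length_eq, hlen']; omega
    exact MoveSeq.step hmv
      (ih l' s' t hd' hsl' (hp.nodup_iff.mpr hnd) hs' (hpm.trans hp.symm) ht)


/-- Every permutation of `[n]` can be sorted in at most `n - ⌈√n⌉ + 1`
cut-and-paste moves. -/
theorem upper_bound_sqrt (n : ℕ) (l : List ℕ) (hperm : l.Perm (List.range' 1 n)) :
    ∃ k ≤ n - ⌈Real.sqrt n⌉₊ + 1, MoveSeq k l (List.range' 1 n) := by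
  rcases Nat.eq_zero_or_pos n with rfl | hn
  · have h0 : l ~ ([] : List ℕ) := by simpa using hperm
    obtain rfl := h0.eq_nil
    exact ⟨0, Nat.zero_le _, by simpa using MoveSeq.refl ([] : List ℕ)⟩
  · set m := ⌈Real.sqrt n⌉₊ with hm
    have hm1 : 1 ≤ m :=
      Nat.ceil_pos.mpr (Real.sqrt_pos.mpr (by exact_mod_cast hn))
    have hNn : (m - 1) * (m - 1) < n := by
      by_contra h
      push_neg at h
      have h1 : (n : ℝ) ≤ ((m - 1 : ℕ) : ℝ) * ((m - 1 : ℕ) : ℝ) := by exact_mod_cast h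
      have h2 : Real.sqrt n ≤ ((m - 1 : ℕ) : ℝ) := by
        rw [show ((m - 1 : ℕ) : ℝ) * ((m - 1 : ℕ) : ℝ) = ((m - 1 : ℕ) : ℝ) ^ 2 by ring] at h1
        calc Real.sqrt n ≤ Real.sqrt (((m - 1 : ℕ) : ℝ) ^ 2) := Real.sqrt_le_sqrt h1
          _ = ((m - 1 : ℕ) : ℝ) := Real.sqrt_sq (by positivity)
      have h3 : m ≤ m - 1 := by rw [hm]; exact Nat.ceil_le.mpr h2
      omega
    have hlen : l.length = n := by rw [hperm.length_eq, List.length_range']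
    have hnd : l.Nodup := hperm.nodup_iff.mpr (List.nodup_range' (s := 1) (n := n))
    set N := (m - 1) * (m - 1) + 1 with hN
    have hNl : N ≤ l.length := by omega
    set f : Fin N → ℕ := fun i => l.get (Fin.castLE hNl i) with hf'
    have hf : Function.Injective f := by
      intro i j hij
      have h1 := List.nodup_iff_injective_get.mp hnd hij
      have h2 : (Fin.castLE hNl i).val = (Fin.castLE hNl j).val := congrArg Fin.val h1
      exact Fin.ext h2
    have hES := my_erdos_szekeres (r := m - 1) (s := m - 1) (f := f) (by omega) hf
    have build : ∀ t : Finset (Fin N), ∃ s0 : List ℕ, s0 <+ l ∧ s0.length = t.card ∧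
        s0 = (Finset.sort t (· ≤ ·)).map f := by
      intro t
      set idx := Finset.sort t (· ≤ ·) with hidx
      have hidxlt : idx.Pairwise (· < ·) := (Finset.sortedLT_sort t).pairwise
      have hjs : (idx.map (Fin.castLE hNl)).Pairwise
          (fun i j : Fin l.length => (i : ℕ) < (j : ℕ)) :=
        List.pairwise_map.mpr (hidxlt.imp (fun h => h))
      refine ⟨(idx.map (Fin.castLE hNl)).map l.get, List.map_getElem_sublist hjs, ?_, ?_⟩
      · simp [hidx]
      · rw [List.map_map]; rfl
    rcases hES with ⟨t, htc, hmono⟩ | ⟨t, htc, hanti⟩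
    · obtain ⟨s0, hsub, hlen0, hs0⟩ := build t
      have hpw : s0.Pairwise (· < ·) := by
        rw [hs0, List.pairwise_map]
        refine (((Finset.sortedLT_sort t).pairwise).imp_of_mem ?_)
        intro a b ha hb hab
        exact hmono ((Finset.mem_sort _).mp ha) ((Finset.mem_sort _).mp hb) hab
      have hms := sort_aux (· < ·) (fun a b h => h.lt_or_gt)
        (fun _ _ _ => Nat.lt_trans) (fun a b h h' => absurd h (Nat.lt_asymm h'))
        (l.length - s0.length) l s0 (List.range' 1 n) rfl hsub hnd hpw
        hperm.symm (List.pairwise_lt_range' (s := 1) (n := n))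
      refine ⟨l.length - s0.length, ?_, hms⟩
      have : m ≤ t.card := by omega
      omega
    · obtain ⟨s0, hsub, hlen0, hs0⟩ := build t
      have hpw : s0.Pairwise (fun a b => b < a) := by
        rw [hs0, List.pairwise_map]
        refine (((Finset.sortedLT_sort t).pairwise).imp_of_mem ?_)
        intro a b ha hb hab
        exact hanti ((Finset.mem_sort _).mp ha) ((Finset.mem_sort _).mp hb) hab
      have htgt : ((List.range' 1 n).reverse).Pairwise (fun a b : ℕ => b < a) :=
        List.pairwise_reverse.mpr (List.pairwise_lt_range' (s := 1) (n := n))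
      have hms := sort_aux (fun a b => b < a) (fun a b h => h.lt_or_gt.symm)
        (fun _ _ _ hab hbc => Nat.lt_trans hbc hab)
        (fun a b h h' => absurd h' (Nat.lt_asymm h))
        (l.length - s0.length) l s0 ((List.range' 1 n).reverse) rfl hsub hnd hpw
        ((List.reverse_perm _).trans hperm.symm) htgt
      have hmv : IsMove ((List.range' 1 n).reverse) (List.range' 1 n) :=
        ⟨[], (List.range' 1 n).reverse, [], [], [], by simp, rfl, Or.inr (by simp)⟩
      refine ⟨l.length - s0.length + 1, ?_, hms.snoc hmv⟩
      have : m ≤ t.card := by omega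
      omega
end

section
/- If a cut-and-paste move on a permutation creates three new parity adjacencies, then the six boundary values involved (the two ends of the moved block, the two elements that bordered it before the move, and the two elements between which it is inserted) satisfy a cyclically alternating chain of same-parity and opposite-parity relations of odd switching number, which is impossible; hence no move creates three new parity adjacencies without destroying at least one. -/
/-- If a cut-and-paste move inserting `π_k … π_l` (possibly reversed) between
`π_m` and `π_{m+1}` makes all three newly consecutive pairs parity adjacencies,
then at least one of the three destroyed pairs was a parity adjacency: the six
boundary values would otherwise lie on a 6-cycle with an odd number of parity
switches, which is impossible. -/
theorem no_three_new_parity_adjacencies (π : ℕ → ℕ) (k l m : ℕ) (rev : Bool)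
    (hnew : π (k - 1) % 2 ≠ π (l + 1) % 2 ∧
      (if rev then π m % 2 ≠ π l % 2 ∧ π k % 2 ≠ π (m + 1) % 2
       else π m % 2 ≠ π k % 2 ∧ π l % 2 ≠ π (m + 1) % 2)) :
    π (k - 1) % 2 ≠ π k % 2 ∨ π l % 2 ≠ π (l + 1) % 2 ∨
      π m % 2 ≠ π (m + 1) % 2 := by
  obtain ⟨h1, h2⟩ := hnew
  cases rev <;> simp only [if_true, if_false, Bool.false_eq_true] at h2 <;>
    obtain ⟨h3, h4⟩ := h2 <;>
  · have a := Nat.mod_two_eq_zero_or_one (π (k-1))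
    have b := Nat.mod_two_eq_zero_or_one (π (l+1))
    have c := Nat.mod_two_eq_zero_or_one (π m)
    have d := Nat.mod_two_eq_zero_or_one (π (m+1))
    have e := Nat.mod_two_eq_zero_or_one (π k)
    have f := Nat.mod_two_eq_zero_or_one (π l)
    omega
end
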